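/- Any matrix produced by running the commuting generation algorithm to termination in the balanced case is a solution of the transportation polytope determined by the marginals: if Σ_j I_j^{(0)} = Σ_i O_i^{(0)}, the final matrix S ∈ M_{n×m}(ℕ) satisfies S_{ij} ≥ 0, Σ_{j=1}^{m} S_{ij} = O_i^{(0)} for all i, and Σ_{i=1}^{n} S_{ij} = I_j^{(0)} for all j; in particular NC(S) = Σ_i O_i^{(0)} is the same for every possible run, so any two matrices S produced by different runs satisfy NC(S) = NC(S'). -/

import Mathlib

/-!
Each step moves one commuter of residence `i` into the matrix entry `(i, j)`, so for every
`i` the quantity `∑ j, S i j + O i` and for every `j` the quantity `∑ i, S i j + I j` is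
invariant along a run. Starting from `S = 0` and ending with `O = 0`, the first invariant
gives the row sums and hence `NC S = ∑ i, O⁰ i`. Summing the second one over `j` and using
the balance condition then forces `I = 0` at the end, which gives the column sums.
-/

structure GenState (n m : ℕ) where
  S : Matrix (Fin n) (Fin m) ℕ
  O : Fin n → ℕ
  I : Fin m → ℕ

def Step {n m : ℕ} (s t : GenState n m) : Prop :=
  ∃ i j, s.O i ≠ 0 ∧ s.I j ≠ 0 ∧
    (t.S = fun i' j' => if i' = i ∧ j' = j then s.S i' j' + 1 else s.S i' j') ∧
    t.O = Function.update s.O i (s.O i - 1) ∧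
    t.I = Function.update s.I j (s.I j - 1)

def NC {n m : ℕ} (S : Matrix (Fin n) (Fin m) ℕ) : ℕ := ∑ i, ∑ j, S i j

theorem apply_eq_apply_zero_of_forall_lt {β : Type*} (f : ℕ → β) (N : ℕ)
    (h : ∀ k < N, f (k + 1) = f k) : f N = f 0 := by
  induction N with
  | zero => rfl
  | succ N ih => rw [h N N.lt_succ_self, ih fun k hk => h k (hk.trans N.lt_succ_self)]

def GenState.transpose {n m : ℕ} (s : GenState n m) : GenState m n where
  S := s.S.transpose
  O := s.I
  I := s.O

namespace Step

variable {n m : ℕ} {s t : GenState n m}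

theorem transpose (h : Step s t) : Step s.transpose t.transpose := by
  obtain ⟨i, j, hOi, hIj, hS, hO, hI⟩ := h
  refine ⟨j, i, hIj, hOi, ?_, hI, hO⟩
  ext j' i'
  change t.S i' j' = if j' = j ∧ i' = i then s.S i' j' + 1 else s.S i' j'
  simp [hS, and_comm]

theorem sum_row_add_O (h : Step s t) (i' : Fin n) :
    ∑ j', t.S i' j' + t.O i' = ∑ j', s.S i' j' + s.O i' := by
  obtain ⟨i, j, hOi, -, hS, hO, -⟩ := h
  rcases eq_or_ne i' i with rfl | hi
  · have hrow : ∑ j', t.S i' j' = ∑ j', s.S i' j' + 1 := by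
      calc ∑ j', t.S i' j' = ∑ j', (s.S i' j' + if j' = j then 1 else 0) := by
            simp only [hS, true_and]
            congr! 1 with j'
            split_ifs <;> rfl
        _ = ∑ j', s.S i' j' + 1 := by simp [Finset.sum_add_distrib]
    rw [hrow, hO, Function.update_self]
    omega
  · simp [hS, hO, hi]

theorem sum_col_add_I (h : Step s t) (j' : Fin m) :
    ∑ i', t.S i' j' + t.I j' = ∑ i', s.S i' j' + s.I j' :=
  h.transpose.sum_row_add_O j'

end Step

section Run

variable {n m : ℕ} (st : ℕ → GenState n m) {N : ℕ}

theorem sum_row_add_O_of_steps (h0 : (st 0).S = 0)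
    (hsteps : ∀ k < N, Step (st k) (st (k + 1))) (i : Fin n) :
    ∑ j, (st N).S i j + (st N).O i = (st 0).O i := by
  simpa [h0] using apply_eq_apply_zero_of_forall_lt (fun k => ∑ j, (st k).S i j + (st k).O i) N
    fun k hk => (hsteps k hk).sum_row_add_O i

theorem sum_col_add_I_of_steps (h0 : (st 0).S = 0)
    (hsteps : ∀ k < N, Step (st k) (st (k + 1))) (j : Fin m) :
    ∑ i, (st N).S i j + (st N).I j = (st 0).I j := by
  simpa [h0] using apply_eq_apply_zero_of_forall_lt (fun k => ∑ i, (st k).S i j + (st k).I j) N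
    fun k hk => (hsteps k hk).sum_col_add_I j

theorem sum_row_eq_of_terminated (h0 : (st 0).S = 0)
    (hsteps : ∀ k < N, Step (st k) (st (k + 1))) (hterm : ∀ i, (st N).O i = 0) (i : Fin n) :
    ∑ j, (st N).S i j = (st 0).O i := by
  simpa [hterm i] using sum_row_add_O_of_steps st h0 hsteps i

theorem NC_eq_of_terminated (h0 : (st 0).S = 0)
    (hsteps : ∀ k < N, Step (st k) (st (k + 1))) (hterm : ∀ i, (st N).O i = 0) :
    NC (st N).S = ∑ i, (st 0).O i :=
  Finset.sum_congr rfl fun i _ => sum_row_eq_of_terminated st h0 hsteps hterm i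

theorem I_eq_zero_of_terminated (h0 : (st 0).S = 0)
    (hbal : ∑ j, (st 0).I j = ∑ i, (st 0).O i)
    (hsteps : ∀ k < N, Step (st k) (st (k + 1))) (hterm : ∀ i, (st N).O i = 0) (j : Fin m) :
    (st N).I j = 0 := by
  have htotal : NC (st N).S + ∑ j, (st N).I j = NC (st N).S :=
    calc NC (st N).S + ∑ j, (st N).I j = ∑ j, (∑ i, (st N).S i j + (st N).I j) := by
          rw [NC, Finset.sum_add_distrib, Finset.sum_comm]
      _ = ∑ j, (st 0).I j := Finset.sum_congr rfl fun j _ => sum_col_add_I_of_steps st h0 hsteps j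
      _ = NC (st N).S := by rw [hbal, NC_eq_of_terminated st h0 hsteps hterm]
  exact Finset.sum_eq_zero_iff.mp (by omega) j (Finset.mem_univ j)

theorem sum_col_eq_of_terminated (h0 : (st 0).S = 0)
    (hbal : ∑ j, (st 0).I j = ∑ i, (st 0).O i)
    (hsteps : ∀ k < N, Step (st k) (st (k + 1))) (hterm : ∀ i, (st N).O i = 0) (j : Fin m) :
    ∑ i, (st N).S i j = (st 0).I j := by
  simpa [I_eq_zero_of_terminated st h0 hbal hsteps hterm j] using
    sum_col_add_I_of_steps st h0 hsteps j

end Run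

/-- Any matrix produced by running the algorithm to termination in the balanced case
`∑ j, I⁰ j = ∑ i, O⁰ i` lies in the transportation polytope determined by the
marginals: its entries are nonnegative, its row sums are the prescribed out-commuter
numbers and its column sums are the prescribed in-commuter numbers; in particular
`NC S = ∑ i, O⁰ i`, so any two matrices produced by different runs with the same
initial data have the same total number of commuters. -/
theorem final_matrix_in_transportation_polytope {n m : ℕ}
    (st : ℕ → GenState n m) (N : ℕ)
    (h0 : (st 0).S = 0)
    (hbal : ∑ j, (st 0).I j = ∑ i, (st 0).O i)
    (hsteps : ∀ k < N, Step (st k) (st (k + 1)))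
    (hterm : ∀ i, (st N).O i = 0) :
    (∀ i j, 0 ≤ (st N).S i j) ∧
    (∀ i, ∑ j, (st N).S i j = (st 0).O i) ∧
    (∀ j, ∑ i, (st N).S i j = (st 0).I j) ∧
    NC (st N).S = ∑ i, (st 0).O i ∧
    (∀ (st' : ℕ → GenState n m) (N' : ℕ),
      (st' 0).S = 0 →
      (st' 0).O = (st 0).O →
      (st' 0).I = (st 0).I →
      (∀ k < N', Step (st' k) (st' (k + 1))) →
      (∀ i, (st' N').O i = 0) →
      NC (st' N').S = NC (st N).S) := by
  refine ⟨fun _ _ => Nat.zero_le _, sum_row_eq_of_terminated st h0 hsteps hterm,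
    sum_col_eq_of_terminated st h0 hbal hsteps hterm, NC_eq_of_terminated st h0 hsteps hterm, ?_⟩
  intro st' N' h0' hO' _ hsteps' hterm'
  rw [NC_eq_of_terminated st' h0' hsteps' hterm', NC_eq_of_terminated st h0 hsteps hterm, hO']
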